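/- arXiv:2305.06541 — 5 statements merged into one kernel-verified Lean document; each statement's English description precedes it below -/
import Mathlib

section
/- Let ρ, v, u, v̄, ū be as follows: ρ : ℝᵈ → ℝ≥0 integrable with ∫ρ > 0, u an indicator function, v measurable with ‖v-u‖_∞ ≤ 1, all relevant weighted integrals finite. Then ∫ ρ (v - v̄)² ≥ (1/4) ∫ ρ |u - ū| - ∫ ρ |v - u|. -/
/-!
Split `u - ū = (v - v̄) - (w - w̄)` with `w = v - u`, so that `(a - b)² ≤ 2a² + 2b²` bounds the
weighted variance of `u` by twice those of `v` and `w`. For an indicator `u` the weighted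
`L¹`-deviation is exactly twice the weighted variance, while the variance of `w` is at most its
second moment, which is at most `∫ ρ |w|` because `|w| ≤ 1`.
-/

open MeasureTheory

variable {α : Type*} [MeasurableSpace α] {μ : Measure α} {ρ f g : α → ℝ}

/-- The paper's `f̄`. -/
noncomputable def weightedMean (μ : Measure α) (ρ f : α → ℝ) : ℝ :=
  (∫ x, ρ x * f x ∂μ) / ∫ x, ρ x ∂μ

lemma integral_mul_eq_weightedMean_mul (hM : ∫ x, ρ x ∂μ ≠ 0) :
    ∫ x, ρ x * f x ∂μ = weightedMean μ ρ f * ∫ x, ρ x ∂μ := by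
  rw [weightedMean, div_mul_cancel₀ _ hM]

lemma weightedMean_sub (hf : Integrable (fun x => ρ x * f x) μ)
    (hg : Integrable (fun x => ρ x * g x) μ) :
    weightedMean μ ρ (fun x => f x - g x) = weightedMean μ ρ f - weightedMean μ ρ g := by
  simp only [weightedMean, mul_sub, integral_sub hf hg, sub_div]

section MulSubSq

variable (hρ : Integrable ρ μ) (hf : Integrable (fun x => ρ x * f x) μ)
  (hf2 : Integrable (fun x => ρ x * f x ^ 2) μ) (c : ℝ)
include hρ hf hf2

lemma integrable_mul_sub_sq : Integrable (fun x => ρ x * (f x - c) ^ 2) μ :=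
  ((hf2.sub (hf.const_mul (2 * c))).add (hρ.const_mul (c ^ 2))).congr
    (.of_forall fun x => by simp only [Pi.add_apply, Pi.sub_apply]; ring)

lemma integral_mul_sub_sq :
    ∫ x, ρ x * (f x - c) ^ 2 ∂μ =
      ∫ x, ρ x * f x ^ 2 ∂μ - 2 * c * ∫ x, ρ x * f x ∂μ + c ^ 2 * ∫ x, ρ x ∂μ := by
  have hlin : Integrable (fun x => ρ x * f x ^ 2 - 2 * c * (ρ x * f x)) μ :=
    hf2.sub (hf.const_mul _)
  rw [← integral_const_mul, ← integral_const_mul, ← integral_sub hf2 (hf.const_mul _),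
    ← integral_add hlin (hρ.const_mul _)]
  congr 1 with x
  ring

lemma integral_mul_sub_weightedMean_sq (hM : ∫ x, ρ x ∂μ ≠ 0) :
    ∫ x, ρ x * (f x - weightedMean μ ρ f) ^ 2 ∂μ =
      ∫ x, ρ x * f x ^ 2 ∂μ - weightedMean μ ρ f ^ 2 * ∫ x, ρ x ∂μ := by
  rw [integral_mul_sub_sq hρ hf hf2, integral_mul_eq_weightedMean_mul (f := f) hM]
  ring

lemma integral_mul_sub_weightedMean_sq_le_integral_mul_sq (hM : 0 < ∫ x, ρ x ∂μ) :
    ∫ x, ρ x * (f x - weightedMean μ ρ f) ^ 2 ∂μ ≤ ∫ x, ρ x * f x ^ 2 ∂μ := by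
  rw [integral_mul_sub_weightedMean_sq hρ hf hf2 hM.ne']
  nlinarith [sq_nonneg (weightedMean μ ρ f)]

end MulSubSq

lemma integral_mul_sq_le_integral_mul_abs (hρ : ∀ x, 0 ≤ ρ x)
    (hf2 : Integrable (fun x => ρ x * f x ^ 2) μ) (hf : Integrable (fun x => ρ x * |f x|) μ)
    (hf1 : ∀ x, |f x| ≤ 1) :
    ∫ x, ρ x * f x ^ 2 ∂μ ≤ ∫ x, ρ x * |f x| ∂μ := by
  refine integral_mono hf2 hf fun x => mul_le_mul_of_nonneg_left ?_ (hρ x)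
  nlinarith [abs_nonneg (f x), sq_abs (f x), hf1 x]

lemma integral_mul_sub_sq_le (hρ : ∀ x, 0 ≤ ρ x)
    (hfg : Integrable (fun x => ρ x * (f x - g x) ^ 2) μ)
    (hf : Integrable (fun x => ρ x * f x ^ 2) μ) (hg : Integrable (fun x => ρ x * g x ^ 2) μ) :
    ∫ x, ρ x * (f x - g x) ^ 2 ∂μ ≤ 2 * ∫ x, ρ x * f x ^ 2 ∂μ + 2 * ∫ x, ρ x * g x ^ 2 ∂μ := by
  rw [← integral_const_mul, ← integral_const_mul, ← integral_add (hf.const_mul _) (hg.const_mul _)]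
  refine integral_mono hfg ((hf.const_mul _).add (hg.const_mul _)) fun x => ?_
  nlinarith [hρ x, mul_nonneg (hρ x) (sq_nonneg (f x + g x))]

lemma integral_mul_sub_weightedMean_sq_le_of_abs_sub_le_one (hρ : ∀ x, 0 ≤ ρ x)
    (hρi : Integrable ρ μ) (hM : 0 < ∫ x, ρ x ∂μ) (hf : Integrable (fun x => ρ x * f x) μ)
    (hf2 : Integrable (fun x => ρ x * f x ^ 2) μ) (hg : Integrable (fun x => ρ x * g x) μ)
    (hg2 : Integrable (fun x => ρ x * g x ^ 2) μ)
    (hgf2 : Integrable (fun x => ρ x * (g x - f x) ^ 2) μ) (hgf : ∀ x, |g x - f x| ≤ 1) :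
    ∫ x, ρ x * (f x - weightedMean μ ρ f) ^ 2 ∂μ ≤
      2 * ∫ x, ρ x * (g x - weightedMean μ ρ g) ^ 2 ∂μ + 2 * ∫ x, ρ x * |g x - f x| ∂μ := by
  set w : α → ℝ := fun x => g x - f x
  have hw : Integrable (fun x => ρ x * w x) μ :=
    (hg.sub hf).congr (.of_forall fun x => (mul_sub _ _ _).symm)
  have hw_abs : Integrable (fun x => ρ x * |w x|) μ :=
    hw.abs.congr (.of_forall fun x => by simp only [abs_mul, abs_of_nonneg (hρ x)])
  have hsplit : ∀ x, (g x - weightedMean μ ρ g) - (w x - weightedMean μ ρ w) =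
      f x - weightedMean μ ρ f := fun x => by
    rw [weightedMean_sub hg hf]; ring
  calc ∫ x, ρ x * (f x - weightedMean μ ρ f) ^ 2 ∂μ
      = ∫ x, ρ x * ((g x - weightedMean μ ρ g) - (w x - weightedMean μ ρ w)) ^ 2 ∂μ := by
        simp only [hsplit]
    _ ≤ 2 * ∫ x, ρ x * (g x - weightedMean μ ρ g) ^ 2 ∂μ +
          2 * ∫ x, ρ x * (w x - weightedMean μ ρ w) ^ 2 ∂μ :=
        integral_mul_sub_sq_le hρ (by simpa only [hsplit] using integrable_mul_sub_sq hρi hf hf2 _)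
          (integrable_mul_sub_sq hρi hg hg2 _) (integrable_mul_sub_sq hρi hw hgf2 _)
    _ ≤ 2 * ∫ x, ρ x * (g x - weightedMean μ ρ g) ^ 2 ∂μ + 2 * ∫ x, ρ x * |w x| ∂μ := by
        linarith [integral_mul_sub_weightedMean_sq_le_integral_mul_sq hρi hw hgf2 hM,
          integral_mul_sq_le_integral_mul_abs hρ hgf2 hw_abs hgf]

section ZeroOne

variable {u : α → ℝ} (hρ : ∀ x, 0 ≤ ρ x) (hρi : Integrable ρ μ) (hM : 0 < ∫ x, ρ x ∂μ)
  (hu : ∀ x, u x = 0 ∨ u x = 1) (hρu : Integrable (fun x => ρ x * u x) μ)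
include hρ hρi hM hu hρu

lemma weightedMean_mem_Icc_of_zero_or_one : weightedMean μ ρ u ∈ Set.Icc 0 1 := by
  have hρu_mem : ∀ x, 0 ≤ ρ x * u x ∧ ρ x * u x ≤ ρ x := fun x => by
    rcases hu x with h | h <;> simp [h, hρ x]
  refine ⟨div_nonneg (integral_nonneg fun x => (hρu_mem x).1) hM.le, (div_le_one hM).2 ?_⟩
  exact integral_mono hρu hρi fun x => (hρu_mem x).2

/-- Both sides equal `2 ū (1 - ū) ∫ ρ`. -/
lemma integral_mul_abs_sub_weightedMean_of_zero_or_one :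
    ∫ x, ρ x * |u x - weightedMean μ ρ u| ∂μ =
      2 * ∫ x, ρ x * (u x - weightedMean μ ρ u) ^ 2 ∂μ := by
  set m := weightedMean μ ρ u
  have hm : m ∈ Set.Icc 0 1 := weightedMean_mem_Icc_of_zero_or_one hρ hρi hM hu hρu
  have hu_sq : ∀ x, ρ x * u x ^ 2 = ρ x * u x := fun x => by
    rcases hu x with h | h <;> simp [h]
  have hu_abs : ∀ x, ρ x * |u x - m| = ρ x * u x - 2 * m * (ρ x * u x) + m * ρ x := fun x => by
    rcases hu x with h | h
    · rw [h, zero_sub, abs_neg, abs_of_nonneg hm.1]; ring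
    · rw [h, abs_of_nonneg (sub_nonneg.2 hm.2)]; ring
  have hρu2 : Integrable (fun x => ρ x * u x ^ 2) μ := by simpa only [hu_sq] using hρu
  rw [integral_mul_sub_weightedMean_sq hρi hρu hρu2 hM.ne']
  simp only [hu_abs, hu_sq]
  have hlin : Integrable (fun x => ρ x * u x - 2 * m * (ρ x * u x)) μ :=
    hρu.sub (hρu.const_mul _)
  rw [integral_add hlin (hρi.const_mul _), integral_sub hρu (hρu.const_mul _),
    integral_const_mul, integral_const_mul, integral_mul_eq_weightedMean_mul hM.ne']
  ring

end ZeroOne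

theorem stmt_4_general (d : ℕ) (ρ v : EuclideanSpace ℝ (Fin d) → ℝ)
    (A : Set (EuclideanSpace ℝ (Fin d))) (hA : MeasurableSet A)
    (u : EuclideanSpace ℝ (Fin d) → ℝ) (hu : u = A.indicator (fun _ => (1 : ℝ)))
    (hρ : ∀ x, 0 ≤ ρ x) (hρi : Integrable ρ) (hpos : 0 < ∫ x, ρ x)
    (hvu : ∀ x, |v x - u x| ≤ 1)
    (hρv : Integrable (fun x => ρ x * v x))
    (hρv2 : Integrable (fun x => ρ x * v x ^ 2))
    (vbar ubar : ℝ)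
    (hvbar : vbar = (∫ x, ρ x * v x) / (∫ x, ρ x))
    (hubar : ubar = (∫ x, ρ x * u x) / (∫ x, ρ x)) :
    (1 / 4) * (∫ x, ρ x * |u x - ubar|) - (∫ x, ρ x * |v x - u x|) ≤
      ∫ x, ρ x * (v x - vbar) ^ 2 := by
  change vbar = weightedMean volume ρ v at hvbar
  change ubar = weightedMean volume ρ u at hubar
  have hu01 : ∀ x, u x = 0 ∨ u x = 1 := fun x => by
    by_cases hx : x ∈ A <;> simp [hu, hx]
  have hρu : Integrable (fun x => ρ x * u x) := by
    simpa [hu, ← Set.indicator_mul_right] using hρi.indicator hA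
  have hρu2 : Integrable (fun x => ρ x * u x ^ 2) :=
    hρu.congr (.of_forall fun x => by rcases hu01 x with h | h <;> simp [h])
  have hρuv : Integrable (fun x => u x * (ρ x * v x)) :=
    hρv.bdd_mul (c := 1) (hu ▸ measurable_const.indicator hA).aestronglyMeasurable
      (.of_forall fun x => by rcases hu01 x with h | h <;> simp [h])
  have hρvu2 : Integrable (fun x => ρ x * (v x - u x) ^ 2) :=
    ((hρv2.sub (hρuv.const_mul 2)).add hρu2).congr
      (.of_forall fun x => by simp only [Pi.add_apply, Pi.sub_apply]; ring)
  have hu_var := integral_mul_sub_weightedMean_sq_le_of_abs_sub_le_one hρ hρi hpos hρu hρu2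
    hρv hρv2 hρvu2 hvu
  have hu_dev := integral_mul_abs_sub_weightedMean_of_zero_or_one hρ hρi hpos hu01 hρu
  rw [← hvbar, ← hubar] at hu_var
  rw [← hubar] at hu_dev
  linarith

theorem stmt_4 (d : ℕ) (ρ v : EuclideanSpace ℝ (Fin d) → ℝ)
    (A : Set (EuclideanSpace ℝ (Fin d))) (hA : MeasurableSet A)
    (u : EuclideanSpace ℝ (Fin d) → ℝ) (hu : u = A.indicator (fun _ => (1 : ℝ)))
    (hρ : ∀ x, 0 ≤ ρ x) (hρi : Integrable ρ) (hpos : 0 < ∫ x, ρ x)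
    (hv : Measurable v) (hvu : ∀ x, |v x - u x| ≤ 1)
    (hρv : Integrable (fun x => ρ x * v x))
    (hρv2 : Integrable (fun x => ρ x * v x ^ 2))
    (vbar ubar : ℝ)
    (hvbar : vbar = (∫ x, ρ x * v x) / (∫ x, ρ x))
    (hubar : ubar = (∫ x, ρ x * u x) / (∫ x, ρ x)) :
    (1 / 4) * (∫ x, ρ x * |u x - ubar|) - (∫ x, ρ x * |v x - u x|) ≤
      ∫ x, ρ x * (v x - vbar) ^ 2 :=
  stmt_4_general d ρ v A hA u hu hρ hρi hpos hvu hρv hρv2 vbar ubar hvbar hubar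
end

section
/- Let R : ℝᵈ → ℝ≥0 be L-Lipschitz and C¹, let θ > 0 with θL < 1, let φ : ℝᵈ → ℝ≥0 be a measurable mollifier supported in the closed unit ball with ∫φ = 1, and let f : ℝᵈ → ℝ≥0 be integrable. Define f_θ(x) = ∫ f(x - θR(x)y) φ(y) dy. Then (1/(1+θL)) ∫ f ≤ ∫ f_θ ≤ (1/(1-θL)) ∫ f. -/
/-!
For fixed `y` with `‖y‖ ≤ 1`, the map `x ↦ x - θ R(x) • y` is a perturbation of the identity by a
`θL`-Lipschitz map with `θL < 1`, hence a bijection of `ℝᵈ`, and its Jacobian determinant is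
`1 - θ ∇R(x) ⬝ y ∈ [1 - θL, 1 + θL]`. The change of variables formula therefore gives
`∫ f / (1 + θL) ≤ ∫ f(x - θ R(x) • y) dx ≤ ∫ f / (1 - θL)`; integrating against `φ(y) dy`
(Tonelli) and using `∫ φ = 1` yields the claim.
-/

open MeasureTheory Set Metric
open scoped ENNReal NNReal

theorem LinearMap.det_id_sub_smulRight {R M : Type*} [CommRing R] [AddCommGroup M] [Module R M]
    [Module.Free R M] [Module.Finite R M] (f : M →ₗ[R] R) (x : M) :
    (LinearMap.id - f.smulRight x).det = 1 - f x := by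
  classical
  let b := Module.Free.chooseBasis R M
  have hM : LinearMap.toMatrix b b (LinearMap.id - f.smulRight x) =
      1 - Matrix.replicateCol Unit (b.repr x) * Matrix.replicateRow Unit (fun j ↦ f (b j)) := by
    ext i j
    simp [LinearMap.toMatrix_apply, Matrix.one_apply, Matrix.mul_apply, Finsupp.single_apply,
      mul_comm, eq_comm]
  have hfx : ∑ i, f (b i) * b.repr x i = f x := by
    conv_rhs => rw [← b.sum_repr x]
    simp only [map_sum, map_smul, smul_eq_mul, mul_comm]
  rw [← LinearMap.det_toMatrix b, hM, Matrix.det_one_sub_mul_comm, Matrix.det_unique]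
  simp [Matrix.mul_apply, hfx]

theorem integral_integral_eq_toReal_lintegral_lintegral {α β : Type*} [MeasurableSpace α]
    [MeasurableSpace β] {μ : Measure α} {ν : Measure β} [SFinite μ] [SFinite ν]
    {F : α → β → ℝ} (hF : ∀ x y, 0 ≤ F x y)
    (hFm : AEStronglyMeasurable (Function.uncurry F) (μ.prod ν))
    (hfin : ∫⁻ x, ∫⁻ y, ENNReal.ofReal (F x y) ∂ν ∂μ ≠ ∞) :
    ∫ x, ∫ y, F x y ∂ν ∂μ = (∫⁻ x, ∫⁻ y, ENNReal.ofReal (F x y) ∂ν ∂μ).toReal := by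
  have hprod : ∫⁻ p, ENNReal.ofReal (Function.uncurry F p) ∂μ.prod ν
      = ∫⁻ x, ∫⁻ y, ENNReal.ofReal (F x y) ∂ν ∂μ :=
    lintegral_prod _ hFm.aemeasurable.ennreal_ofReal
  have hint : Integrable (Function.uncurry F) (μ.prod ν) :=
    ⟨hFm, (hasFiniteIntegral_iff_ofReal (.of_forall fun p : α × β ↦ hF p.1 p.2)).2
      (hprod ▸ hfin.lt_top)⟩
  rw [integral_integral hint, ← hprod]
  exact integral_eq_lintegral_of_nonneg_ae (.of_forall fun p ↦ hF p.1 p.2) hFm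

section MollifierShift

variable {E : Type*} [NormedAddCommGroup E] [NormedSpace ℝ E] {s : E → ℝ} {K : ℝ≥0} {y : E}

theorem approximatesLinearOn_sub_smul (hs : LipschitzWith K s) (hy : ‖y‖ ≤ 1) :
    ApproximatesLinearOn (fun x ↦ x - s x • y)
      ((ContinuousLinearEquiv.refl ℝ E : E ≃L[ℝ] E) : E →L[ℝ] E) univ K := by
  intro x _ x' _
  have heq : x - s x • y - (x' - s x' • y) - (x - x') = (s x' - s x) • y := by
    rw [sub_smul]; abel
  calc ‖x - s x • y - (x' - s x' • y) - (x - x')‖ = ‖s x' - s x‖ * ‖y‖ := by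
        rw [heq, norm_smul]
    _ ≤ (K * ‖x' - x‖) * 1 := by
        gcongr
        exact hs.norm_sub_le x' x
    _ = K * ‖x - x'‖ := by rw [mul_one, norm_sub_rev]

theorem bijective_sub_smul [CompleteSpace E] (hs : LipschitzWith K s) (hK : K < 1)
    (hy : ‖y‖ ≤ 1) : Function.Bijective (fun x ↦ x - s x • y) := by
  have happrox := approximatesLinearOn_sub_smul hs hy
  have hc : Subsingleton E ∨ K < ‖((ContinuousLinearEquiv.refl ℝ E).symm : E →L[ℝ] E)‖₊⁻¹ := by
    rcases subsingleton_or_nontrivial E with h | h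
    · exact Or.inl h
    · right
      simpa using hK
  exact ⟨Set.injOn_univ.1 (happrox.injOn hc), happrox.surjective hc⟩

theorem hasFDerivAt_sub_smul (hsd : Differentiable ℝ s) (x : E) :
    HasFDerivAt (fun x ↦ x - s x • y)
      (ContinuousLinearMap.id ℝ E - (fderiv ℝ s x).smulRight y) x :=
  (hasFDerivAt_id x).sub ((hsd x).hasFDerivAt.smul_const y)

theorem ofReal_abs_det_fderiv_sub_smul_bounds [FiniteDimensional ℝ E] (hs : LipschitzWith K s)
    (hy : ‖y‖ ≤ 1) (x : E) :
    1 - (K : ℝ≥0∞) ≤ ENNReal.ofReal |(ContinuousLinearMap.id ℝ E - (fderiv ℝ s x).smulRight y).det|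
    ∧ ENNReal.ofReal |(ContinuousLinearMap.id ℝ E - (fderiv ℝ s x).smulRight y).det|
      ≤ 1 + K := by
  have hdet : (ContinuousLinearMap.id ℝ E - (fderiv ℝ s x).smulRight y).det
      = 1 - fderiv ℝ s x y :=
    LinearMap.det_id_sub_smulRight (fderiv ℝ s x : E →ₗ[ℝ] ℝ) y
  have hder : |fderiv ℝ s x y| ≤ K :=
    calc |fderiv ℝ s x y| ≤ ‖fderiv ℝ s x‖ * ‖y‖ := (fderiv ℝ s x).le_opNorm y
      _ ≤ K * 1 := by gcongr; exact norm_fderiv_le_of_lipschitz ℝ hs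
      _ = K := mul_one _
  rw [hdet]
  constructor
  · calc 1 - (K : ℝ≥0∞) = ENNReal.ofReal (1 - K) := by
          rw [ENNReal.ofReal_sub _ K.coe_nonneg, ENNReal.ofReal_one, ENNReal.ofReal_coe_nnreal]
      _ ≤ _ := ENNReal.ofReal_le_ofReal <| by
          linarith [le_abs_self (1 - fderiv ℝ s x y), abs_le.1 hder]
  · calc ENNReal.ofReal |1 - fderiv ℝ s x y| ≤ ENNReal.ofReal (1 + K) :=
          ENNReal.ofReal_le_ofReal <| abs_le.2
            ⟨by linarith [abs_le.1 hder], by linarith [abs_le.1 hder]⟩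
      _ = 1 + K := by
          rw [ENNReal.ofReal_add zero_le_one K.coe_nonneg, ENNReal.ofReal_one,
            ENNReal.ofReal_coe_nnreal]

theorem lintegral_comp_sub_smul_bounds [FiniteDimensional ℝ E] [MeasurableSpace E]
    [BorelSpace E] (μ : Measure E) [μ.IsAddHaarMeasure] (hs : LipschitzWith K s)
    (hsd : Differentiable ℝ s) (hK : K < 1) (hy : ‖y‖ ≤ 1) (f : E → ℝ≥0∞) :
    (∫⁻ x, f x ∂μ) / (1 + K) ≤ ∫⁻ x, f (x - s x • y) ∂μ ∧
      ∫⁻ x, f (x - s x • y) ∂μ ≤ (∫⁻ x, f x ∂μ) / (1 - K) := by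
  have hbij := bijective_sub_smul hs hK hy
  have hchange := lintegral_image_eq_lintegral_abs_det_fderiv_mul μ MeasurableSet.univ
    (fun x _ ↦ (hasFDerivAt_sub_smul hsd x).hasFDerivWithinAt) hbij.injective.injOn f
  rw [image_univ, hbij.surjective.range_eq, Measure.restrict_univ] at hchange
  have hdet := ofReal_abs_det_fderiv_sub_smul_bounds hs hy
  constructor
  · refine ENNReal.div_le_of_le_mul' ?_
    calc ∫⁻ x, f x ∂μ = _ := hchange
      _ ≤ ∫⁻ x, (1 + K) * f (x - s x • y) ∂μ :=
          lintegral_mono fun x ↦ by gcongr; exact (hdet x).2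
      _ = (1 + K) * ∫⁻ x, f (x - s x • y) ∂μ := lintegral_const_mul' _ _ (by simp)
  · rw [ENNReal.le_div_iff_mul_le (Or.inl (tsub_pos_of_lt (ENNReal.coe_lt_one_iff.2 hK)).ne')
      (Or.inl (by simp)), mul_comm]
    calc (1 - K) * ∫⁻ x, f (x - s x • y) ∂μ = ∫⁻ x, (1 - K) * f (x - s x • y) ∂μ :=
          (lintegral_const_mul' _ _ (by simp)).symm
      _ ≤ _ := lintegral_mono fun x ↦ by gcongr; exact (hdet x).1
      _ = ∫⁻ x, f x ∂μ := hchange.symm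

theorem lintegral_lintegral_comp_sub_smul_mul_bounds [FiniteDimensional ℝ E] [MeasurableSpace E]
    [BorelSpace E] (μ : Measure E) [μ.IsAddHaarMeasure] (ν : Measure E) [SFinite ν]
    (hs : LipschitzWith K s) (hsd : Differentiable ℝ s) (hK : K < 1) {f φ : E → ℝ≥0∞}
    (hf : Measurable f) (hφ : AEMeasurable φ ν) (hφsupp : Function.support φ ⊆ closedBall 0 1)
    (hφ1 : ∫⁻ y, φ y ∂ν = 1) :
    (∫⁻ x, f x ∂μ) / (1 + K) ≤ ∫⁻ x, ∫⁻ y, f (x - s x • y) * φ y ∂ν ∂μ ∧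
      ∫⁻ x, ∫⁻ y, f (x - s x • y) * φ y ∂ν ∂μ ≤ (∫⁻ x, f x ∂μ) / (1 - K) := by
  have hmap : Continuous fun p : E × E ↦ p.1 - s p.1 • p.2 := by
    have := hs.continuous
    fun_prop
  have hswap : ∫⁻ x, ∫⁻ y, f (x - s x • y) * φ y ∂ν ∂μ
      = ∫⁻ y, (∫⁻ x, f (x - s x • y) ∂μ) * φ y ∂ν := by
    rw [lintegral_lintegral_swap
      ((hf.comp hmap.measurable).aemeasurable.mul hφ.comp_snd)]
    exact lintegral_congr fun y ↦ lintegral_mul_const _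
      (hf.comp (hmap.comp (Continuous.prodMk_left y)).measurable)
  have hbound : ∀ y, (∫⁻ x, f x ∂μ) / (1 + K) * φ y ≤ (∫⁻ x, f (x - s x • y) ∂μ) * φ y ∧
      (∫⁻ x, f (x - s x • y) ∂μ) * φ y ≤ (∫⁻ x, f x ∂μ) / (1 - K) * φ y := by
    intro y
    by_cases hy : φ y = 0
    · simp [hy]
    · have hy1 : ‖y‖ ≤ 1 := mem_closedBall_zero_iff.1 (hφsupp hy)
      obtain ⟨hlo, hhi⟩ := lintegral_comp_sub_smul_bounds μ hs hsd hK hy1 f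
      exact ⟨by gcongr, by gcongr⟩
  rw [hswap]
  constructor
  · calc (∫⁻ x, f x ∂μ) / (1 + K) = ∫⁻ y, (∫⁻ x, f x ∂μ) / (1 + K) * φ y ∂ν := by
          rw [lintegral_const_mul'' _ hφ, hφ1, mul_one]
      _ ≤ _ := lintegral_mono fun y ↦ (hbound y).1
  · calc _ ≤ ∫⁻ y, (∫⁻ x, f x ∂μ) / (1 - K) * φ y ∂ν := lintegral_mono fun y ↦ (hbound y).2
      _ = (∫⁻ x, f x ∂μ) / (1 - K) := by rw [lintegral_const_mul'' _ hφ, hφ1, mul_one]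

theorem integral_integral_comp_sub_smul_mul_bounds [FiniteDimensional ℝ E] [MeasurableSpace E]
    [BorelSpace E] (μ : Measure E) [μ.IsAddHaarMeasure] (ν : Measure E) [SFinite ν]
    (hs : LipschitzWith K s) (hsd : Differentiable ℝ s) (hK : K < 1) {f φ : E → ℝ}
    (hf_nonneg : ∀ x, 0 ≤ f x) (hf_meas : Measurable f) (hf_int : Integrable f μ)
    (hφ_nonneg : ∀ y, 0 ≤ φ y) (hφ_int : Integrable φ ν)
    (hφsupp : Function.support φ ⊆ closedBall 0 1) (hφ1 : ∫ y, φ y ∂ν = 1) :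
    (∫ x, f x ∂μ) / (1 + K) ≤ ∫ x, ∫ y, f (x - s x • y) * φ y ∂ν ∂μ ∧
      ∫ x, ∫ y, f (x - s x • y) * φ y ∂ν ∂μ ≤ (∫ x, f x ∂μ) / (1 - K) := by
  have hφ1' : ∫⁻ y, ENNReal.ofReal (φ y) ∂ν = 1 := by
    rw [← ofReal_integral_eq_lintegral_ofReal hφ_int (.of_forall hφ_nonneg), hφ1,
      ENNReal.ofReal_one]
  have hφsupp' : Function.support (fun y ↦ ENNReal.ofReal (φ y)) ⊆ closedBall 0 1 :=
    fun y hy ↦ hφsupp fun h ↦ hy (by simp [h])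
  obtain ⟨hlo, hhi⟩ := lintegral_lintegral_comp_sub_smul_mul_bounds μ ν hs hsd hK
    hf_meas.ennreal_ofReal hφ_int.aemeasurable.ennreal_ofReal hφsupp' hφ1'
  set I := ∫⁻ x, ENNReal.ofReal (f x) ∂μ
  set J := ∫⁻ x, ∫⁻ y, ENNReal.ofReal (f (x - s x • y)) * ENNReal.ofReal (φ y) ∂ν ∂μ
  have hupper_fin : I / (1 - K) ≠ ∞ := (ENNReal.div_lt_top hf_int.lintegral_lt_top.ne
    (tsub_pos_of_lt (ENNReal.coe_lt_one_iff.2 hK)).ne').ne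
  have hJfin : J ≠ ∞ := ne_top_of_le_ne_top hupper_fin hhi
  have hI : ∫ x, f x ∂μ = I.toReal :=
    integral_eq_lintegral_of_nonneg_ae (.of_forall hf_nonneg) hf_meas.aestronglyMeasurable
  have hJ : ∫ x, ∫ y, f (x - s x • y) * φ y ∂ν ∂μ = J.toReal := by
    have hmap : Continuous fun p : E × E ↦ p.1 - s p.1 • p.2 := by
      have := hs.continuous
      fun_prop
    simp_rw [J, ← ENNReal.ofReal_mul (hf_nonneg _)] at hJfin ⊢
    exact integral_integral_eq_toReal_lintegral_lintegral
      (fun x y ↦ mul_nonneg (hf_nonneg _) (hφ_nonneg y))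
      ((hf_meas.comp hmap.measurable).aestronglyMeasurable.mul hφ_int.1.comp_snd) hJfin
  have hadd : (1 + (K : ℝ≥0∞)).toReal = 1 + K := by
    rw [ENNReal.toReal_add ENNReal.one_ne_top ENNReal.coe_ne_top, ENNReal.toReal_one,
      ENNReal.coe_toReal]
  have hsub : (1 - (K : ℝ≥0∞)).toReal = 1 - K := by
    rw [ENNReal.toReal_sub_of_le (ENNReal.coe_le_one_iff.2 hK.le) ENNReal.one_ne_top,
      ENNReal.toReal_one, ENNReal.coe_toReal]
  rw [hI, hJ, ← hadd, ← hsub, ← ENNReal.toReal_div, ← ENNReal.toReal_div]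
  exact ⟨ENNReal.toReal_mono hJfin hlo, ENNReal.toReal_mono hupper_fin hhi⟩

end MollifierShift

theorem stmt_8_general (d : ℕ) (R : EuclideanSpace ℝ (Fin d) → ℝ) (L θ : ℝ) (hL : 0 ≤ L)
    (hRlip : LipschitzWith (Real.toNNReal L) R)
    (hRC1 : ContDiff ℝ 1 R)
    (hθ : 0 < θ) (hθL : θ * L < 1)
    (φ : EuclideanSpace ℝ (Fin d) → ℝ) (hφnn : ∀ y, 0 ≤ φ y)
    (hφsupp : Function.support φ ⊆ Metric.closedBall 0 1)
    (hφi : Integrable φ) (hφ1 : (∫ y, φ y) = 1)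
    (f : EuclideanSpace ℝ (Fin d) → ℝ) (hfnn : ∀ x, 0 ≤ f x)
    (hfi : Integrable f) (hfm : Measurable f) :
    (1 / (1 + θ * L)) * (∫ x, f x) ≤ (∫ x, ∫ y, f (x - (θ * R x) • y) * φ y) ∧
    (∫ x, ∫ y, f (x - (θ * R x) • y) * φ y) ≤ (1 / (1 - θ * L)) * ∫ x, f x := by
  set K : ℝ≥0 := ‖θ‖₊ * L.toNNReal
  have hKθL : (K : ℝ) = θ * L := by simp [K, abs_of_pos hθ, hL]
  have hK : K < 1 := by rw [← NNReal.coe_lt_coe, hKθL]; exact hθL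
  have hs : LipschitzWith K (fun x ↦ θ * R x) := (lipschitzWith_smul θ).comp hRlip
  have hsd : Differentiable ℝ (fun x ↦ θ * R x) :=
    (hRC1.differentiable one_ne_zero).const_mul θ
  rw [one_div_mul_eq_div, one_div_mul_eq_div, ← hKθL]
  exact integral_integral_comp_sub_smul_mul_bounds volume volume hs hsd hK hfnn hfm hfi hφnn hφi
    hφsupp hφ1

theorem stmt_8 (d : ℕ) (R : EuclideanSpace ℝ (Fin d) → ℝ) (L θ : ℝ) (hL : 0 ≤ L)
    (hRnn : ∀ x, 0 ≤ R x) (hRlip : LipschitzWith (Real.toNNReal L) R)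
    (hRC1 : ContDiff ℝ 1 R)
    (hθ : 0 < θ) (hθL : θ * L < 1)
    (φ : EuclideanSpace ℝ (Fin d) → ℝ) (hφnn : ∀ y, 0 ≤ φ y)
    (hφsupp : Function.support φ ⊆ Metric.closedBall 0 1)
    (hφi : Integrable φ) (hφ1 : (∫ y, φ y) = 1)
    (f : EuclideanSpace ℝ (Fin d) → ℝ) (hfnn : ∀ x, 0 ≤ f x)
    (hfi : Integrable f) (hfm : Measurable f) :
    (1 / (1 + θ * L)) * (∫ x, f x) ≤ (∫ x, ∫ y, f (x - (θ * R x) • y) * φ y) ∧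
    (∫ x, ∫ y, f (x - (θ * R x) • y) * φ y) ≤ (1 / (1 - θ * L)) * ∫ x, f x :=
  stmt_8_general d R L θ hL hRlip hRC1 hθ hθL φ hφnn hφsupp hφi hφ1 f hfnn hfi hfm
end

section
/- Let R : ℝᵈ → ℝ≥0 be L-Lipschitz and C¹, let φ be a C¹ mollifier supported in the unit ball with ∫φ = 1, let u : ℝᵈ → ℝ be C¹, and define u_θ(x) = ∫ u(x - θR(x)y) φ(y) dy for θ > 0. Then for all x, |∇u_θ(x)| ≤ (1 + θL) · ∫ |∇u(x - θR(x)y)| φ(y) dy. -/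
/-!
By the chain rule, `∇u_θ(x) = ∫ φ(y) (I - θ ∇R(x) ⊗ y)ᵀ ∇u(x - θR(x)y) dy`; differentiating under
the integral is legitimate because the integrand's derivative is jointly continuous and `φ` has
compact support. On `supp φ ⊆ B(0, 1)` the operator `I - θ ∇R(x) ⊗ y` has norm at most
`1 + θ ‖∇R(x)‖ ≤ 1 + θL`, since `R` is `L`-Lipschitz.
-/

open MeasureTheory

section ParametricIntegral

variable {H α F : Type*} [NormedAddCommGroup H] [NormedSpace ℝ H] [WeaklyLocallyCompactSpace H]
  [NormedAddCommGroup F] [NormedSpace ℝ F]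
  [TopologicalSpace α] [SecondCountableTopology α] [MeasurableSpace α] [OpensMeasurableSpace α]
  {μ : Measure α} [IsFiniteMeasureOnCompacts μ]

theorem hasFDerivAt_integral_smul_of_hasCompactSupport {g : H → α → F} {g' : H → α → H →L[ℝ] F}
    {φ : α → ℝ} (hg : Continuous (Function.uncurry g)) (hg' : Continuous (Function.uncurry g'))
    (hdiff : ∀ x y, HasFDerivAt (g · y) (g' x y) x) (hφ : Continuous φ) (hφc : HasCompactSupport φ)
    (x₀ : H) :
    HasFDerivAt (fun x ↦ ∫ y, φ y • g x y ∂μ) (∫ y, φ y • g' x₀ y ∂μ) x₀ := by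
  obtain ⟨K, hK, hKx₀⟩ := exists_compact_mem_nhds x₀
  obtain ⟨C, hC⟩ := (hK.prod hφc).exists_bound_of_continuousOn hg'.continuousOn
  have h_bound : ∀ᵐ y ∂μ, ∀ x ∈ K, ‖φ y • g' x y‖ ≤ ‖φ y‖ * C := by
    refine .of_forall fun y x hx ↦ ?_
    by_cases hy : y ∈ tsupport φ
    · rw [norm_smul]
      exact mul_le_mul_of_nonneg_left (hC (x, y) ⟨hx, hy⟩) (norm_nonneg _)
    · simp [image_eq_zero_of_notMem_tsupport hy]
  refine hasFDerivAt_integral_of_dominated_of_fderiv_le hKx₀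
    (.of_forall fun x ↦ (hφ.smul (hg.uncurry_left x)).aestronglyMeasurable)
    ((hφ.smul (hg.uncurry_left x₀)).integrable_of_hasCompactSupport hφc.smul_right)
    (hφ.smul (hg'.uncurry_left x₀)).aestronglyMeasurable h_bound
    ((hφ.integrable_of_hasCompactSupport hφc).norm.mul_const C)
    (.of_forall fun y x _ ↦ (hdiff x y).const_smul (φ y))

end ParametricIntegral

section VariableMollification

variable {E F : Type*} [NormedAddCommGroup E] [NormedSpace ℝ E] [NormedAddCommGroup F]
  [NormedSpace ℝ F]

theorem HasFDerivAt.id_sub_mul_smul_const {R : E → ℝ} {R' : StrongDual ℝ E} {x : E}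
    (hR : HasFDerivAt R R' x) (c : ℝ) (y : E) :
    HasFDerivAt (fun x ↦ x - (c * R x) • y) (.id ℝ E - (c • R').smulRight y) x :=
  (hasFDerivAt_id x).sub ((hR.const_mul c).smul_const y)

theorem ContinuousLinearMap.norm_id_sub_smul_smulRight_le {θ K : ℝ} (hθ : 0 ≤ θ)
    {f : StrongDual ℝ E} (hf : ‖f‖ ≤ K) {y : E} (hy : ‖y‖ ≤ 1) :
    ‖.id ℝ E - (θ • f).smulRight y‖ ≤ 1 + θ * K :=
  calc _ ≤ ‖ContinuousLinearMap.id ℝ E‖ + ‖θ • f‖ * ‖y‖ :=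
        (norm_sub_le _ _).trans_eq (by rw [norm_smulRight_apply])
    _ ≤ 1 + θ * K * 1 := by
        rw [norm_smul, Real.norm_of_nonneg hθ]
        exact add_le_add norm_id_le <| mul_le_mul (mul_le_mul_of_nonneg_left hf hθ) hy
          (norm_nonneg y) (mul_nonneg hθ ((norm_nonneg f).trans hf))
    _ = 1 + θ * K := by rw [mul_one]

theorem norm_smul_comp_id_sub_smul_smulRight_le {φ : E → ℝ} (hφnn : ∀ y, 0 ≤ φ y)
    (hsupp : Function.support φ ⊆ Metric.closedBall 0 1) {θ K : ℝ} (hθ : 0 ≤ θ)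
    {f : StrongDual ℝ E} (hf : ‖f‖ ≤ K) (G : E →L[ℝ] F) (y : E) :
    ‖φ y • G.comp (.id ℝ E - (θ • f).smulRight y)‖ ≤ (1 + θ * K) * (‖G‖ * φ y) := by
  by_cases hy : φ y = 0
  · simp [hy]
  have hA := ContinuousLinearMap.norm_id_sub_smul_smulRight_le hθ hf (y := y)
    (by simpa using hsupp hy)
  calc _ = ‖G.comp (.id ℝ E - (θ • f).smulRight y)‖ * φ y := by
        rw [norm_smul, Real.norm_of_nonneg (hφnn y), mul_comm]
    _ ≤ ‖G‖ * (1 + θ * K) * φ y :=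
        mul_le_mul_of_nonneg_right ((G.opNorm_comp_le _).trans (by gcongr)) (hφnn y)
    _ = _ := by ring

variable [FiniteDimensional ℝ E] [MeasurableSpace E] [BorelSpace E] {μ : Measure E}
  [IsFiniteMeasureOnCompacts μ]

theorem hasFDerivAt_integral_smul_comp_sub_mul_smul {u : E → F} {R φ : E → ℝ}
    (hu : ContDiff ℝ 1 u) (hR : ContDiff ℝ 1 R) (hφ : Continuous φ) (hφc : HasCompactSupport φ)
    (θ : ℝ) (x₀ : E) :
    HasFDerivAt (fun x ↦ ∫ y, φ y • u (x - (θ * R x) • y) ∂μ)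
      (∫ y, φ y • (fderiv ℝ u (x₀ - (θ * R x₀) • y)).comp
        (.id ℝ E - (θ • fderiv ℝ R x₀).smulRight y) ∂μ) x₀ := by
  have hp : Continuous fun q : E × E ↦ q.1 - (θ * R q.1) • q.2 := by
    have := hR.continuous; fun_prop
  have hA : Continuous fun q : E × E ↦ .id ℝ E - (θ • fderiv ℝ R q.1).smulRight q.2 :=
    continuous_const.sub <| isBoundedBilinearMap_smulRight.continuous.comp
      (((hR.continuous_fderiv one_ne_zero).comp continuous_fst).const_smul θ |>.prodMk
        continuous_snd)
  refine hasFDerivAt_integral_smul_of_hasCompactSupport (μ := μ)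
    (g := fun x y ↦ u (x - (θ * R x) • y))
    (g' := fun x y ↦
      (fderiv ℝ u (x - (θ * R x) • y)).comp (.id ℝ E - (θ • fderiv ℝ R x).smulRight y))
    (hu.continuous.comp hp)
    (((hu.continuous_fderiv one_ne_zero).comp hp).clm_comp hA) (fun x y ↦ ?_) hφ hφc x₀
  exact (hu.differentiable one_ne_zero _).hasFDerivAt.comp x
    ((hR.differentiable one_ne_zero x).hasFDerivAt.id_sub_mul_smul_const θ y)

end VariableMollification

theorem norm_gradient_eq_norm_fderiv {𝕜 E : Type*} [RCLike 𝕜] [NormedAddCommGroup E]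
    [InnerProductSpace 𝕜 E] [CompleteSpace E] (f : E → 𝕜) (x : E) :
    ‖gradient f x‖ = ‖fderiv 𝕜 f x‖ :=
  (InnerProductSpace.toDual 𝕜 E).symm.norm_map _

theorem stmt_11_general (d : ℕ) (R : EuclideanSpace ℝ (Fin d) → ℝ) (L : NNReal)
    (hRlip : LipschitzWith L R) (hRC1 : ContDiff ℝ 1 R)
    (φ : EuclideanSpace ℝ (Fin d) → ℝ) (hφ : ContDiff ℝ 1 φ) (hφnn : ∀ y, 0 ≤ φ y)
    (hsupp : Function.support φ ⊆ Metric.closedBall 0 1)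
    (u : EuclideanSpace ℝ (Fin d) → ℝ) (hu : ContDiff ℝ 1 u)
    (θ : ℝ) (hθ : 0 < θ)
    (uθ : EuclideanSpace ℝ (Fin d) → ℝ)
    (huθ : uθ = fun x => ∫ y, u (x - (θ * R x) • y) * φ y) :
    ∀ x, ‖gradient uθ x‖ ≤
      (1 + θ * (L : ℝ)) * ∫ y, ‖gradient u (x - (θ * R x) • y)‖ * φ y := by
  intro x
  have hφc : HasCompactSupport φ := .of_support_subset_isCompact (isCompact_closedBall 0 1) hsupp
  have huθ' : uθ = fun x ↦ ∫ y, φ y • u (x - (θ * R x) • y) := by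
    simp_rw [huθ, smul_eq_mul, mul_comm]
  have hderiv := huθ' ▸ hasFDerivAt_integral_smul_comp_sub_mul_smul (μ := volume) hu hRC1
    hφ.continuous hφc θ x
  have hint : Integrable fun y ↦ (1 + θ * L) * (‖fderiv ℝ u (x - (θ * R x) • y)‖ * φ y) :=
    .const_mul (Continuous.integrable_of_hasCompactSupport
      (((hu.continuous_fderiv one_ne_zero).comp (by fun_prop)).norm.mul hφ.continuous)
      hφc.mul_left) _
  simp_rw [norm_gradient_eq_norm_fderiv]
  rw [hderiv.fderiv, ← integral_const_mul]
  exact (norm_integral_le_integral_norm _).trans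
    (integral_mono_of_nonneg (.of_forall fun _ ↦ norm_nonneg _) hint (.of_forall fun y ↦
      norm_smul_comp_id_sub_smul_smulRight_le hφnn hsupp hθ.le
        (norm_fderiv_le_of_lipschitz ℝ hRlip) _ y))

theorem stmt_11 (d : ℕ) (R : EuclideanSpace ℝ (Fin d) → ℝ) (L : NNReal)
    (hRnn : ∀ x, 0 ≤ R x) (hRlip : LipschitzWith L R) (hRC1 : ContDiff ℝ 1 R)
    (φ : EuclideanSpace ℝ (Fin d) → ℝ) (hφ : ContDiff ℝ 1 φ) (hφnn : ∀ y, 0 ≤ φ y)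
    (hsupp : Function.support φ ⊆ Metric.closedBall 0 1) (hφ1 : (∫ y, φ y) = 1)
    (u : EuclideanSpace ℝ (Fin d) → ℝ) (hu : ContDiff ℝ 1 u)
    (θ : ℝ) (hθ : 0 < θ)
    (uθ : EuclideanSpace ℝ (Fin d) → ℝ)
    (huθ : uθ = fun x => ∫ y, u (x - (θ * R x) • y) * φ y) :
    ∀ x, ‖gradient uθ x‖ ≤
      (1 + θ * (L : ℝ)) * ∫ y, ‖gradient u (x - (θ * R x) • y)‖ * φ y :=
  stmt_11_general d R L hRlip hRC1 φ hφ hφnn hsupp u hu θ hθ uθ huθ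
end

section
/- Let ρ, R : ℝᵈ → ℝ≥0 with R L-Lipschitz and C¹, θL ≤ 1/2, and suppose the pointwise bound ρ(x)|u_θ(x) - u(x)| ≤ 4θ ∫₀¹ (ρR|∇u|)_{tθ}(x) dt holds for all x, with ρR|∇u| integrable. Then ∫ ρ|u_θ - u| ≤ 8θ ∫ ρ R |∇u|. -/
/-!
Where the `L`-Lipschitz function `R` is differentiable (almost everywhere, by Rademacher), the
map `x ↦ x - R x • v` has derivative `id - DR(x) ⊗ v`, a rank-one perturbation of the identity
with determinant `1 - DR(x) v ≥ 1 - L‖v‖`, and the map is injective once `L‖v‖ < 1`. The change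
of variables formula then gives `∫ F (x - R x • v) dx ≤ 2 ∫ F` whenever `L‖v‖ ≤ 1/2`, which covers
`v = tθy` with `t ≤ 1`, `‖y‖ ≤ 1`. Integrating the pointwise bound in `x` and moving the
`x`-integral inside the `t`- and `y`-integrals (Tonelli) gives `4θ · 2 ∫ ρR|∇u|`.
-/

open MeasureTheory Metric
open scoped ENNReal NNReal

theorem LinearMap.det_id_sub_smulRight_s14 {𝕜 E : Type*} [Field 𝕜] [AddCommGroup E] [Module 𝕜 E]
    [FiniteDimensional 𝕜 E] (ℓ : E →ₗ[𝕜] 𝕜) (v : E) :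
    (LinearMap.id - ℓ.smulRight v).det = 1 - ℓ v := by
  classical
  let b := Module.finBasis 𝕜 E
  have hM : LinearMap.toMatrix b b (LinearMap.id - ℓ.smulRight v)
      = 1 - Matrix.replicateCol (Fin 1) (b.repr v) * Matrix.replicateRow (Fin 1) (ℓ ∘ b) := by
    ext i j
    simp [LinearMap.toMatrix_apply, Matrix.one_apply, Matrix.mul_apply, Finsupp.single_apply,
      eq_comm, mul_comm]
  rw [← LinearMap.det_toMatrix b, hM, Matrix.det_one_sub_mul_comm, Matrix.det_unique]
  simp only [Matrix.sub_apply, Matrix.one_apply_eq, Matrix.mul_apply,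
    Matrix.replicateRow_apply, Matrix.replicateCol_apply, Function.comp_apply]
  conv_rhs => rw [← b.sum_repr v]
  simp only [map_sum, map_smul, smul_eq_mul, mul_comm]

theorem ContinuousLinearMap.det_id_sub_smulRight_s14 {𝕜 E : Type*} [Field 𝕜] [TopologicalSpace 𝕜]
    [AddCommGroup E] [Module 𝕜 E] [TopologicalSpace E] [ContinuousSMul 𝕜 E]
    [IsTopologicalAddGroup E] [FiniteDimensional 𝕜 E] (ℓ : E →L[𝕜] 𝕜) (v : E) :
    (ContinuousLinearMap.id 𝕜 E - ℓ.smulRight v).det = 1 - ℓ v :=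
  LinearMap.det_id_sub_smulRight_s14 (ℓ : E →ₗ[𝕜] 𝕜) v

theorem ofReal_integral_le_lintegral_ofReal {α : Type*} [MeasurableSpace α]
    {μ : Measure α} {g : α → ℝ} (hg : 0 ≤ g) :
    ENNReal.ofReal (∫ a, g a ∂μ) ≤ ∫⁻ a, ENNReal.ofReal (g a) ∂μ :=
  calc ENNReal.ofReal (∫ a, g a ∂μ) ≤ ‖∫ a, g a ∂μ‖ₑ := Real.ofReal_le_enorm _
    _ ≤ ∫⁻ a, ‖g a‖ₑ ∂μ := enorm_integral_le_lintegral_enorm _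
    _ = ∫⁻ a, ENNReal.ofReal (g a) ∂μ := by simp only [Real.enorm_of_nonneg (hg _)]

theorem AEMeasurable.exists_measurable_ae_eq_of_support_subset {α β : Type*}
    [MeasurableSpace α] [MeasurableSpace β] [Zero β] {μ : Measure α} {g : α → β}
    (hg : AEMeasurable g μ) {s : Set α} (hs : MeasurableSet s) (hsupp : Function.support g ⊆ s) :
    ∃ G, Measurable G ∧ g =ᵐ[μ] G ∧ Function.support G ⊆ s := by
  refine ⟨s.indicator hg.mk, hg.measurable_mk.indicator hs, ?_, Set.support_indicator_subset⟩
  filter_upwards [hg.ae_eq_mk] with y hy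
  by_cases hys : y ∈ s
  · rw [Set.indicator_of_mem hys, hy]
  · rw [Set.indicator_of_notMem hys, Function.notMem_support.1 fun h ↦ hys (hsupp h)]

theorem integral_le_of_lintegral_ofReal_le {α : Type*} [MeasurableSpace α] {μ : Measure α}
    {g : α → ℝ} (hg : 0 ≤ g) {C : ℝ} (hC : 0 ≤ C)
    (h : ∫⁻ a, ENNReal.ofReal (g a) ∂μ ≤ ENNReal.ofReal C) : ∫ a, g a ∂μ ≤ C := by
  refine (le_abs_self _).trans ((norm_integral_le_lintegral_norm g).trans
    (ENNReal.toReal_le_of_le_ofReal hC ?_))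
  simpa only [Real.norm_of_nonneg (hg _)] using h

/-- The paper's `F_s`: `F` averaged against `Φ` over the ball of radius `s R(x)` around `x`. -/
noncomputable def varMollify {E : Type*} [AddCommGroup E] [Module ℝ E] [MeasurableSpace E]
    (μ : Measure E) (R : E → ℝ) (Φ : E → ℝ≥0∞) (s : ℝ) (F : E → ℝ≥0∞) (x : E) : ℝ≥0∞ :=
  ∫⁻ y, F (x - (s * R x) • y) * Φ y ∂μ

section LipschitzShear

variable {E : Type*} [NormedAddCommGroup E] [NormedSpace ℝ E] {R : E → ℝ} {L : ℝ≥0}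

theorem LipschitzWith.injective_sub_smul (hR : LipschitzWith L R) {v : E} (hv : L * ‖v‖ < 1) :
    Function.Injective fun x ↦ x - R x • v := by
  intro a b hab
  have hdiff : a - b = (R a - R b) • v := by
    rw [sub_smul]; exact sub_eq_sub_iff_sub_eq_sub.2 hab
  have hle : ‖a - b‖ ≤ L * ‖v‖ * ‖a - b‖ :=
    calc ‖a - b‖ = |R a - R b| * ‖v‖ := by rw [hdiff, norm_smul, Real.norm_eq_abs]
      _ ≤ L * ‖a - b‖ * ‖v‖ := by
          gcongr; simpa [Real.dist_eq, dist_eq_norm] using hR.dist_le_mul a b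
      _ = L * ‖v‖ * ‖a - b‖ := by ring
  have : ‖a - b‖ = 0 := by nlinarith [norm_nonneg (a - b)]
  exact sub_eq_zero.1 (norm_eq_zero.1 this)

variable [FiniteDimensional ℝ E]

theorem LipschitzWith.one_sub_mul_le_abs_det (hR : LipschitzWith L R) (x v : E) :
    1 - L * ‖v‖ ≤ |(ContinuousLinearMap.id ℝ E - (fderiv ℝ R x).smulRight v).det| := by
  have : |fderiv ℝ R x v| ≤ L * ‖v‖ :=
    ((fderiv ℝ R x).le_opNorm v).trans (by gcongr; exact norm_fderiv_le_of_lipschitz ℝ hR)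
  rw [ContinuousLinearMap.det_id_sub_smulRight_s14]
  linarith [le_abs_self (1 - fderiv ℝ R x v), (abs_le.1 this).2]

variable [MeasurableSpace E] [BorelSpace E] (μ : Measure E) [μ.IsAddHaarMeasure]

theorem LipschitzWith.ofReal_one_sub_mul_lintegral_comp_sub_smul_le (hR : LipschitzWith L R)
    {v : E} (hv : L * ‖v‖ < 1) (F : E → ℝ≥0∞) :
    ENNReal.ofReal (1 - L * ‖v‖) * ∫⁻ x, F (x - R x • v) ∂μ ≤ ∫⁻ x, F x ∂μ := by
  set s := {x | DifferentiableAt ℝ R x}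
  have hs : MeasurableSet s := measurableSet_of_differentiableAt ℝ R
  calc ENNReal.ofReal (1 - L * ‖v‖) * ∫⁻ x, F (x - R x • v) ∂μ
      = ∫⁻ x in s, ENNReal.ofReal (1 - L * ‖v‖) * F (x - R x • v) ∂μ := by
        rw [Measure.restrict_eq_self_of_ae_mem (s := s) (hR.ae_differentiableAt (μ := μ)),
          lintegral_const_mul' _ _ ENNReal.ofReal_ne_top]
    _ ≤ ∫⁻ x in s, ENNReal.ofReal
          |(ContinuousLinearMap.id ℝ E - (fderiv ℝ R x).smulRight v).det| * F (x - R x • v) ∂μ := by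
        gcongr with x
        exact hR.one_sub_mul_le_abs_det x v
    _ = ∫⁻ x in (fun x ↦ x - R x • v) '' s, F x ∂μ :=
        (lintegral_image_eq_lintegral_abs_det_fderiv_mul μ hs
          (fun x hx ↦ ((hasFDerivAt_id x).sub (hx.hasFDerivAt.smul_const v)).hasFDerivWithinAt)
          (hR.injective_sub_smul hv).injOn F).symm
    _ ≤ ∫⁻ x, F x ∂μ := setLIntegral_le_lintegral _ _

theorem LipschitzWith.lintegral_comp_sub_smul_le_two_mul (hR : LipschitzWith L R)
    {v : E} (hv : L * ‖v‖ ≤ 1 / 2) (F : E → ℝ≥0∞) :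
    ∫⁻ x, F (x - R x • v) ∂μ ≤ 2 * ∫⁻ x, F x ∂μ := by
  have hhalf : (2 : ℝ≥0∞)⁻¹ ≤ ENNReal.ofReal (1 - L * ‖v‖) := by
    rw [← ENNReal.ofReal_ofNat, ← ENNReal.ofReal_inv_of_pos two_pos]
    exact ENNReal.ofReal_le_ofReal (by linarith)
  rw [← ENNReal.inv_mul_le_iff (by norm_num) (by norm_num)]
  exact (mul_le_mul_left hhalf _).trans
    (hR.ofReal_one_sub_mul_lintegral_comp_sub_smul_le μ (by linarith) F)

variable {μ} {F Φ : E → ℝ≥0∞}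

theorem measurable_varMollify_integrand (hR : Continuous R) (hF : Measurable F)
    (hΦ : Measurable Φ) :
    Measurable fun p : E × ℝ × E ↦ F (p.1 - (p.2.1 * R p.1) • p.2.2) * Φ p.2.2 :=
  (hF.comp (by fun_prop)).mul (hΦ.comp (measurable_snd.comp measurable_snd))

theorem LipschitzWith.lintegral_varMollify_le (hR : LipschitzWith L R) {s : ℝ}
    (hs : |s| * L ≤ 1 / 2) (hF : Measurable F) (hΦ : Measurable Φ)
    (hΦsupp : Function.support Φ ⊆ closedBall 0 1) (hΦ1 : ∫⁻ y, Φ y ∂μ ≤ 1) :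
    ∫⁻ x, varMollify μ R Φ s F x ∂μ ≤ 2 * ∫⁻ x, F x ∂μ := by
  have hmeas : Measurable fun p : E × E ↦ F (p.1 - (s * R p.1) • p.2) * Φ p.2 :=
    (measurable_varMollify_integrand hR.continuous hF hΦ).comp
      (measurable_fst.prodMk (measurable_const.prodMk measurable_snd))
  have hshift : ∀ y, ∫⁻ x, F (x - (s * R x) • y) * Φ y ∂μ ≤ 2 * (∫⁻ x, F x ∂μ) * Φ y := by
    intro y
    have hT : Continuous fun x ↦ x - (s * R x) • y := by have := hR.continuous; fun_prop
    rw [lintegral_mul_const (Φ y) (f := fun x ↦ F (x - (s * R x) • y)) (hF.comp hT.measurable)]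
    rcases eq_or_ne (Φ y) 0 with hy | hy
    · simp [hy]
    have hy1 : ‖y‖ ≤ 1 := by simpa using hΦsupp hy
    have hv : L * ‖s • y‖ ≤ 1 / 2 := by
      rw [norm_smul, Real.norm_eq_abs]
      nlinarith [abs_nonneg s, L.coe_nonneg, norm_nonneg y]
    gcongr
    simpa only [mul_comm s, ← smul_smul] using hR.lintegral_comp_sub_smul_le_two_mul μ hv F
  calc ∫⁻ x, varMollify μ R Φ s F x ∂μ
      = ∫⁻ y, ∫⁻ x, F (x - (s * R x) • y) * Φ y ∂μ ∂μ :=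
        lintegral_lintegral_swap hmeas.aemeasurable
    _ ≤ ∫⁻ y, 2 * (∫⁻ x, F x ∂μ) * Φ y ∂μ := lintegral_mono hshift
    _ = 2 * (∫⁻ x, F x ∂μ) * ∫⁻ y, Φ y ∂μ := lintegral_const_mul _ hΦ
    _ ≤ 2 * ∫⁻ x, F x ∂μ := mul_le_of_le_one_right' hΦ1

theorem LipschitzWith.lintegral_setLIntegral_varMollify_le (hR : LipschitzWith L R) {θ : ℝ}
    (hθ : 0 ≤ θ) (hθL : θ * L ≤ 1 / 2) (hF : Measurable F) (hΦ : Measurable Φ)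
    (hΦsupp : Function.support Φ ⊆ closedBall 0 1) (hΦ1 : ∫⁻ y, Φ y ∂μ ≤ 1) :
    ∫⁻ x, (∫⁻ t in Set.Ioc 0 1, varMollify μ R Φ (t * θ) F x) ∂μ ≤ 2 * ∫⁻ x, F x ∂μ := by
  have hmeas : Measurable fun p : E × ℝ ↦ varMollify μ R Φ (p.2 * θ) F p.1 :=
    Measurable.lintegral_prod_right' <| (measurable_varMollify_integrand hR.continuous hF hΦ).comp
      ((measurable_fst.comp measurable_fst).prodMk
        (((measurable_snd.comp measurable_fst).mul_const θ).prodMk measurable_snd))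
  have hscale : ∀ t ∈ Set.Ioc (0 : ℝ) 1, |t * θ| * L ≤ 1 / 2 := fun t ht ↦ by
    rw [abs_of_nonneg (mul_nonneg ht.1.le hθ)]
    nlinarith [ht.2, mul_nonneg hθ L.coe_nonneg]
  calc ∫⁻ x, (∫⁻ t in Set.Ioc 0 1, varMollify μ R Φ (t * θ) F x) ∂μ
      = ∫⁻ t in Set.Ioc 0 1, ∫⁻ x, varMollify μ R Φ (t * θ) F x ∂μ :=
        lintegral_lintegral_swap hmeas.aemeasurable
    _ ≤ ∫⁻ t in Set.Ioc (0 : ℝ) 1, 2 * ∫⁻ x, F x ∂μ :=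
        setLIntegral_mono measurable_const fun t ht ↦
          hR.lintegral_varMollify_le (hscale t ht) hF hΦ hΦsupp hΦ1
    _ = 2 * ∫⁻ x, F x ∂μ := by simp

theorem ofReal_integral_le_varMollify {f φ : E → ℝ} (hf : 0 ≤ f) (hφ : 0 ≤ φ)
    (hfF : (fun z ↦ ENNReal.ofReal (f z)) =ᵐ[μ] F) (hφΦ : (fun y ↦ ENNReal.ofReal (φ y)) =ᵐ[μ] Φ)
    {x : E} (hx : ENNReal.ofReal (f x) = F x) (s : ℝ) :
    ENNReal.ofReal (∫ y, f (x - (s * R x) • y) * φ y ∂μ) ≤ varMollify μ R Φ s F x := by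
  have hcomp : ∀ᵐ y ∂μ, ENNReal.ofReal (f (x - (s * R x) • y)) = F (x - (s * R x) • y) := by
    rcases eq_or_ne (s * R x) 0 with hc | hc
    · simp [hc, hx]
    · exact ((Measure.measurePreserving_sub_left μ x).quasiMeasurePreserving.comp
        (Measure.quasiMeasurePreserving_smul μ hc)).ae hfF
  refine (ofReal_integral_le_lintegral_ofReal fun y ↦ mul_nonneg (hf _) (hφ y)).trans
    (le_of_eq (lintegral_congr_ae ?_))
  filter_upwards [hcomp, hφΦ] with y h1 h2
  rw [ENNReal.ofReal_mul (hf _), h1, h2]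

theorem ofReal_intervalIntegral_le_setLIntegral_varMollify {f φ : E → ℝ} (hf : 0 ≤ f)
    (hφ : 0 ≤ φ) (hfF : (fun z ↦ ENNReal.ofReal (f z)) =ᵐ[μ] F)
    (hφΦ : (fun y ↦ ENNReal.ofReal (φ y)) =ᵐ[μ] Φ) {x : E} (hx : ENNReal.ofReal (f x) = F x)
    (θ : ℝ) :
    ENNReal.ofReal (∫ t in (0 : ℝ)..1, ∫ y, f (x - (t * θ * R x) • y) * φ y ∂μ) ≤
      ∫⁻ t in Set.Ioc 0 1, varMollify μ R Φ (t * θ) F x := by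
  rw [intervalIntegral.integral_of_le zero_le_one]
  exact (ofReal_integral_le_lintegral_ofReal fun t ↦
    integral_nonneg fun y ↦ mul_nonneg (hf _) (hφ y)).trans
      (lintegral_mono fun t ↦ ofReal_integral_le_varMollify hf hφ hfF hφΦ hx _)

end LipschitzShear

theorem stmt_14_general (d : ℕ) (ρ R : EuclideanSpace ℝ (Fin d) → ℝ)
    (hρnn : ∀ x, 0 ≤ ρ x) (hRnn : ∀ x, 0 ≤ R x)
    (L : NNReal) (hRlip : LipschitzWith L R)
    (θ : ℝ) (hθ : 0 < θ) (hθL : θ * (L : ℝ) ≤ 1 / 2)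
    (u : EuclideanSpace ℝ (Fin d) → ℝ)
    (φ : EuclideanSpace ℝ (Fin d) → ℝ) (hφnn : ∀ y, 0 ≤ φ y)
    (hsupp : Function.support φ ⊆ Metric.closedBall 0 1) (hφ1 : (∫ y, φ y) = 1)
    (uθ : EuclideanSpace ℝ (Fin d) → ℝ)
    (hpt : ∀ x, ρ x * |uθ x - u x| ≤
      4 * θ * ∫ t in (0:ℝ)..1, ∫ y,
        ρ (x - (t * θ * R x) • y) * R (x - (t * θ * R x) • y) *
          ‖gradient u (x - (t * θ * R x) • y)‖ * φ y)
    (hint : Integrable (fun x => ρ x * R x * ‖gradient u x‖)) :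
    ∫ x, ρ x * |uθ x - u x| ≤ 8 * θ * ∫ x, ρ x * R x * ‖gradient u x‖ := by
  set f := fun x ↦ ρ x * R x * ‖gradient u x‖
  have hf : 0 ≤ f := fun x ↦ mul_nonneg (mul_nonneg (hρnn x) (hRnn x)) (norm_nonneg _)
  have hφint : Integrable φ := by
    by_contra h; rw [integral_undef h] at hφ1; exact zero_ne_one hφ1
  -- `f` and `φ` need not be measurable: Tonelli is applied to measurable representatives.
  obtain ⟨F, hF, hfF⟩ := hint.aemeasurable.ennreal_ofReal
  obtain ⟨Φ, hΦ, hφΦ, hΦsupp⟩ :=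
    hφint.aemeasurable.ennreal_ofReal.exists_measurable_ae_eq_of_support_subset
      measurableSet_closedBall ((Function.support_comp_subset ENNReal.ofReal_zero φ).trans hsupp)
  have hΦ1 : ∫⁻ y, Φ y ≤ 1 := by
    rw [← lintegral_congr_ae hφΦ, ← ofReal_integral_eq_lintegral_ofReal hφint
      (.of_forall hφnn), hφ1, ENNReal.ofReal_one]
  have hpt' : ∀ᵐ x, ENNReal.ofReal (ρ x * |uθ x - u x|) ≤
      ENNReal.ofReal (4 * θ) * ∫⁻ t in Set.Ioc 0 1, varMollify volume R Φ (t * θ) F x := by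
    filter_upwards [hfF] with x hx
    grw [hpt x, ENNReal.ofReal_mul (by positivity)]
    gcongr
    exact ofReal_intervalIntegral_le_setLIntegral_varMollify hf hφnn hfF hφΦ hx θ
  refine integral_le_of_lintegral_ofReal_le (fun x ↦ mul_nonneg (hρnn x) (abs_nonneg _))
    (mul_nonneg (by positivity) (integral_nonneg hf)) ?_
  calc ∫⁻ x, ENNReal.ofReal (ρ x * |uθ x - u x|)
      ≤ ENNReal.ofReal (4 * θ) *
          ∫⁻ x, (∫⁻ t in Set.Ioc 0 1, varMollify volume R Φ (t * θ) F x) := by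
        rw [← lintegral_const_mul' _ _ ENNReal.ofReal_ne_top]
        exact lintegral_mono_ae hpt'
    _ ≤ ENNReal.ofReal (4 * θ) * (2 * ∫⁻ x, F x) := by
        gcongr
        exact hRlip.lintegral_setLIntegral_varMollify_le hθ.le hθL hF hΦ hΦsupp hΦ1
    _ = ENNReal.ofReal (8 * θ * ∫ x, f x) := by
        rw [← lintegral_congr_ae hfF, ← ofReal_integral_eq_lintegral_ofReal hint (.of_forall hf),
          show 8 * θ * ∫ x, f x = 4 * θ * (2 * ∫ x, f x) by ring,
          ENNReal.ofReal_mul (by positivity : (0 : ℝ) ≤ 4 * θ), ENNReal.ofReal_mul zero_le_two,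
          ENNReal.ofReal_ofNat]

theorem stmt_14 (d : ℕ) (ρ R : EuclideanSpace ℝ (Fin d) → ℝ)
    (hρnn : ∀ x, 0 ≤ ρ x) (hRnn : ∀ x, 0 ≤ R x)
    (L : NNReal) (hRlip : LipschitzWith L R) (hRC1 : ContDiff ℝ 1 R)
    (θ : ℝ) (hθ : 0 < θ) (hθL : θ * (L : ℝ) ≤ 1 / 2)
    (u : EuclideanSpace ℝ (Fin d) → ℝ) (hu : ContDiff ℝ 1 u)
    (φ : EuclideanSpace ℝ (Fin d) → ℝ) (hφnn : ∀ y, 0 ≤ φ y)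
    (hsupp : Function.support φ ⊆ Metric.closedBall 0 1) (hφ1 : (∫ y, φ y) = 1)
    (uθ : EuclideanSpace ℝ (Fin d) → ℝ)
    (huθ : uθ = fun x => ∫ y, u (x - (θ * R x) • y) * φ y)
    (hpt : ∀ x, ρ x * |uθ x - u x| ≤
      4 * θ * ∫ t in (0:ℝ)..1, ∫ y,
        ρ (x - (t * θ * R x) • y) * R (x - (t * θ * R x) • y) *
          ‖gradient u (x - (t * θ * R x) • y)‖ * φ y)
    (hint : Integrable (fun x => ρ x * R x * ‖gradient u x‖)) :
    ∫ x, ρ x * |uθ x - u x| ≤ 8 * θ * ∫ x, ρ x * R x * ‖gradient u x‖ :=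
  stmt_14_general d ρ R hρnn hRnn L hRlip θ hθ hθL u φ hφnn hsupp hφ1 uθ hpt hint
end

section
/- Let ρ : ℝ → ℝ>0 be integrable, and suppose R : ℝ → ℝ>0 is 1-Lipschitz and satisfies: for all z and all x, y ∈ [z - R(z), z + R(z)], ρ(x) ≤ 2ρ(y). Suppose the (ρ, ρR)-isoperimetric constant Φ is attained at the cut x = 0, where the cut has weight ρ(0)R(0), i.e. Φ = ρ(0)R(0) / min(∫_{-∞}^0 ρ, ∫_0^∞ ρ). Then ∫_{R(0)/2}^∞ ρ(x) dx ≥ (1/5) ∫_0^∞ ρ(x) dx. -/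
open MeasureTheory

theorem stmt_16 (ρ R : ℝ → ℝ) (hρ : ∀ x, 0 < ρ x) (hρi : Integrable ρ)
    (hR : ∀ x, 0 < R x) (hRlip : LipschitzWith 1 R)
    (hvar : ∀ z x y, x ∈ Set.Icc (z - R z) (z + R z) → y ∈ Set.Icc (z - R z) (z + R z) →
      ρ x ≤ 2 * ρ y)
    (hopt : ∀ t : ℝ,
      ρ 0 * R 0 / min (∫ x in Set.Iic (0:ℝ), ρ x) (∫ x in Set.Ici (0:ℝ), ρ x) ≤
      ρ t * R t / min (∫ x in Set.Iic t, ρ x) (∫ x in Set.Ici t, ρ x)) :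
    (1 / 5) * (∫ x in Set.Ici (0:ℝ), ρ x) ≤ ∫ x in Set.Ici (R 0 / 2), ρ x := by
  set c : ℝ := R 0 / 2 with hc_def
  have hc : 0 < c := half_pos (hR 0)
  -- R c ≥ c
  have hRc : c ≤ R c := by
    have h0 := hRlip.dist_le_mul c 0
    simp only [NNReal.coe_one, one_mul, Real.dist_eq, sub_zero] at h0
    have h1 := (abs_le.mp h0).1
    rw [abs_of_pos hc] at h1
    have h2 : R 0 = 2 * c := by rw [hc_def]; ring
    linarith
  -- key pointwise bound
  have hkey : ∀ x ∈ Set.Ioc (0:ℝ) c, ρ x ≤ 2 * ρ (x + c) := by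
    intro x hx
    apply hvar c
    · constructor <;> [linarith [hx.1]; linarith [hx.2]]
    · constructor <;> [linarith [hx.1]; linarith [hx.2]]
  have hmeas : MeasurableSet (Set.Ioc (0:ℝ) c) := measurableSet_Ioc
  have hint1 : IntegrableOn ρ (Set.Ioc 0 c) := hρi.integrableOn
  have hint2 : IntegrableOn (fun x => 2 * ρ (x + c)) (Set.Ioc 0 c) :=
    ((hρi.comp_add_right c).const_mul 2).integrableOn
  have hmono : ∫ x in Set.Ioc (0:ℝ) c, ρ x ≤ ∫ x in Set.Ioc (0:ℝ) c, 2 * ρ (x + c) :=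
    setIntegral_mono_on hint1 hint2 hmeas hkey
  -- translate
  have htrans : ∫ x in Set.Ioc (0:ℝ) c, ρ (x + c) = ∫ x in Set.Ioc c (2*c), ρ x := by
    rw [← intervalIntegral.integral_of_le hc.le, ← intervalIntegral.integral_of_le (by linarith : c ≤ 2*c)]
    have h := intervalIntegral.integral_comp_add_right (a := 0) (b := c) (f := ρ) c
    rw [show (2:ℝ)*c = c + c by ring]
    simpa using h
  have hpos : 0 ≤ᵐ[volume.restrict (Set.Ioi c)] ρ :=
    Filter.Eventually.of_forall fun x => (hρ x).le
  have hsub : ∫ x in Set.Ioc c (2*c), ρ x ≤ ∫ x in Set.Ioi c, ρ x :=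
    setIntegral_mono_set hρi.integrableOn hpos
      (HasSubset.Subset.eventuallyLE Set.Ioc_subset_Ioi_self)
  have h2 : ∫ x in Set.Ioc (0:ℝ) c, ρ x ≤ 2 * ∫ x in Set.Ioi c, ρ x := by
    calc ∫ x in Set.Ioc (0:ℝ) c, ρ x ≤ ∫ x in Set.Ioc (0:ℝ) c, 2 * ρ (x + c) := hmono
      _ = 2 * ∫ x in Set.Ioc (0:ℝ) c, ρ (x + c) := by rw [integral_const_mul]
      _ = 2 * ∫ x in Set.Ioc c (2*c), ρ x := by rw [htrans]
      _ ≤ 2 * ∫ x in Set.Ioi c, ρ x := by linarith [hsub]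
  -- split Ioi 0
  have hsplit : ∫ x in Set.Ioi (0:ℝ), ρ x
      = (∫ x in Set.Ioc (0:ℝ) c, ρ x) + ∫ x in Set.Ioi c, ρ x := by
    rw [← setIntegral_union (Set.Ioc_disjoint_Ioi le_rfl) measurableSet_Ioi
      hρi.integrableOn hρi.integrableOn, Set.Ioc_union_Ioi_eq_Ioi hc.le]
  have hIci0 : ∫ x in Set.Ici (0:ℝ), ρ x = ∫ x in Set.Ioi (0:ℝ), ρ x :=
    integral_Ici_eq_integral_Ioi
  have hIcic : ∫ x in Set.Ici c, ρ x = ∫ x in Set.Ioi c, ρ x :=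
    integral_Ici_eq_integral_Ioi
  have htail : (0:ℝ) ≤ ∫ x in Set.Ioi c, ρ x :=
    setIntegral_nonneg measurableSet_Ioi fun x _ => (hρ x).le
  rw [hIci0, hIcic, hsplit]
  linarith
end
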